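/- Let A be a real vector space, f : A → ℝ a non-zero linear form, T : A → A a linear operator, and equip A with the multiplication xy = (f(x)T(y) + f(y)T(x))/2 (so A is the algebra induced by the linear operator T). Then A is a Bernstein algebra, i.e., (x²)² = f(x)² x² for all x ∈ A, if and only if f(x)T(x) = f(T(x)) T²(x) for all x ∈ A. -/

import Mathlib

/-!
Squaring in the induced algebra gives `x² = f(x) T(x)`, hence `(x²)² - f(x)² x² = f(x)² D(x, x)` with
`D(x, z) = f(T x) T²(z) - f(x) T(z)`. So the Bernstein identity says exactly that the quadratic map
`x ↦ D(x, x)` vanishes off the hyperplane `ker f`. Since `f ≠ 0`, any `x ∈ ker f` is the midpoint of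
`x + y` and `x - y` for some `y ∉ ker f`, and the parallelogram law
`D(x+y, x+y) + D(x-y, x-y) = 2 D(x, x) + 2 D(y, y)` carries the vanishing over to `ker f`.
-/

namespace LinearMap

variable {K V M : Type*} [Field K] [AddCommGroup V] [Module K V] [AddCommGroup M] [Module K M]

theorem apply_self_eq_zero_of_forall_ne_zero [NeZero (2 : K)] {f : V →ₗ[K] K} (hf : f ≠ 0)
    {B : V →ₗ[K] V →ₗ[K] M} (hB : ∀ x, f x ≠ 0 → B x x = 0) (x : V) : B x x = 0 := by
  by_cases hx : f x = 0
  swap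
  · exact hB x hx
  obtain ⟨y, hy⟩ : ∃ y, f y ≠ 0 := by
    by_contra! h
    exact hf (LinearMap.ext h)
  have hadd := hB (x + y) (by simpa [hx] using hy)
  have hsub := hB (x - y) (by simpa [hx] using hy)
  have hyy := hB y hy
  simp only [map_add, map_sub, add_apply, sub_apply] at hadd hsub
  have h2 : (2 : K) • B x x = 0 := by
    linear_combination (norm := module) hadd + hsub - (2 : K) • hyy
  exact (smul_eq_zero.mp h2).resolve_left two_ne_zero

end LinearMap

section InducedAlgebra

variable {K A : Type*} [Field K] [AddCommGroup A] [Module K A]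

def bernsteinDefect (f : A →ₗ[K] K) (T : A →ₗ[K] A) : A →ₗ[K] A →ₗ[K] A :=
  (LinearMap.lsmul K A).compl₁₂ (f ∘ₗ T) (T ∘ₗ T) - (LinearMap.lsmul K A).compl₁₂ f T

theorem bernsteinDefect_apply_self (f : A →ₗ[K] K) (T : A →ₗ[K] A) (x : A) :
    bernsteinDefect f T x x = f (T x) • T (T x) - f x • T x :=
  rfl

variable [NeZero (2 : K)] {f : A →ₗ[K] K} {T : A →ₗ[K] A} {mul : A → A → A}

theorem mul_self_eq_of_induced (hmul : ∀ x y, mul x y = (2⁻¹ : K) • (f x • T y + f y • T x))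
    (x : A) : mul x x = f x • T x := by
  rw [hmul, ← two_smul K, smul_smul, inv_mul_cancel₀ two_ne_zero, one_smul]

theorem sq_mul_sq_sub_of_induced (hmul : ∀ x y, mul x y = (2⁻¹ : K) • (f x • T y + f y • T x))
    (x : A) :
    mul (mul x x) (mul x x) - f x ^ 2 • mul x x = f x ^ 2 • bernsteinDefect f T x x := by
  simp only [mul_self_eq_of_induced hmul, bernsteinDefect_apply_self, map_smul, smul_eq_mul,
    smul_smul]
  module

end InducedAlgebra

theorem stmt_9 (A : Type*) [AddCommGroup A] [Module ℝ A]
    (f : A →ₗ[ℝ] ℝ) (hf : f ≠ 0) (T : A →ₗ[ℝ] A)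
    (mul : A → A → A)
    (hmul : ∀ x y : A, mul x y = (2⁻¹ : ℝ) • (f x • T y + f y • T x)) :
    (∀ x : A, mul (mul x x) (mul x x) = (f x) ^ 2 • mul x x)
    ↔
    (∀ x : A, f x • T x = f (T x) • T (T x)) := by
  have hbernstein (x : A) :
      mul (mul x x) (mul x x) = f x ^ 2 • mul x x ↔ f x ^ 2 • bernsteinDefect f T x x = 0 := by
    rw [← sub_eq_zero, sq_mul_sq_sub_of_induced hmul]
  have hdefect (x : A) : f x • T x = f (T x) • T (T x) ↔ bernsteinDefect f T x x = 0 := by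
    rw [bernsteinDefect_apply_self, sub_eq_zero, eq_comm]
  simp only [hbernstein, hdefect]
  constructor
  · intro h
    exact LinearMap.apply_self_eq_zero_of_forall_ne_zero hf fun x hx =>
      (smul_eq_zero.mp (h x)).resolve_left (pow_ne_zero 2 hx)
  · intro h x
    rw [h, smul_zero]
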